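/- For every ε > 0 there exists δ > 0 such that for every σ ∈ (2, 2+δ) the following holds: if a solution (X,Y,Z) of the system (S) (with parameters corresponding to σ) satisfies Z > 0 on its domain, (X,Y,Z)(η) → P2 as η → −∞, and (X,Y,Z)(η) → P0^λ as η → +∞ for some λ ∈ [−β/(2α), 0), then λ > −ε. Equivalently, with λ(σ) denoting the parabola parameter of the ω-limit of the orbit going out of P2, one has liminf_{σ→2⁺} λ(σ) = 0. -/

import Mathlib

open Real Set Filter Topology

/-!
Write `b = σ - 2` and `c = β/α = 2(m-1)/(σ+2)`; for a given `ε` let `e = min (ε/11) (1/4)` and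
`δ = min 1 ((m-1)e)`, so that `b ≤ (m-1)e` and `b ≤ 4ec`. Then `λ ∈ [-c/2, 0)`, and `Z` increases
from `0` to `z₀ = -λ(λ + c)`. Comparing the values of `X` and `Y` at their global maxima (critical
points) with their limits at `±∞` gives `X ≤ b/16` and `Y ≤ b/8` along the whole orbit. Once
`Z ≥ 2ec`, the `Y`-equation forces `Y' ≤ -ec/2` as long as `Y ≥ -e`, so `Y` falls below `-e` within
time `2/(ec)` and stays there; meanwhile `Z` grows by at most `b z₀ / 2`, and afterwards `X` decays
so fast that `Z + b z₀ X / ((m-1)e)` is nonincreasing. Hence `z₀ ≤ 5ec`, and `z₀ ≥ -λ c / 2` gives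
`-λ ≤ 10e`.
-/

/-- The self-similar exponent `α = (σ+2)/((σ-2)(m-1))`. -/
noncomputable def ssAlpha (m σ : ℝ) : ℝ := (σ + 2) / ((σ - 2) * (m - 1))

/-- The self-similar exponent `β = 2/(σ-2)`. -/
noncomputable def ssBeta (σ : ℝ) : ℝ := 2 / (σ - 2)

/-- `(X,Y,Z)` satisfies the quadratic system (S) at time `η`:
`X' = X((m−1)Y − 2X)`, `Y' = −Y² − (β/α)Y + X − XY − Z`, `Z' = (σ−2)XZ`. -/
def SysAt (m σ : ℝ) (X Y Z : ℝ → ℝ) (η : ℝ) : Prop :=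
  HasDerivAt X (X η * ((m - 1) * Y η - 2 * X η)) η ∧
  HasDerivAt Y (-(Y η) ^ 2 - ssBeta σ / ssAlpha m σ * Y η + X η - X η * Y η - Z η) η ∧
  HasDerivAt Z ((σ - 2) * X η * Z η) η

/-- The equilibrium `P0^λ = (0, λ, −λ² − (β/α)λ)` on the critical parabola. -/
noncomputable def P0pt (m σ l : ℝ) : ℝ × ℝ × ℝ :=
  (0, l, -l ^ 2 - ssBeta σ / ssAlpha m σ * l)

/-- The equilibrium `P2 = ((m−1)/(2(m+1)α), 1/((m+1)α), 0)`. -/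
noncomputable def P2pt (m σ : ℝ) : ℝ × ℝ × ℝ :=
  ((m - 1) / (2 * (m + 1) * ssAlpha m σ), 1 / ((m + 1) * ssAlpha m σ), 0)

theorem pos_of_hasDerivAt_mul {f g : ℝ → ℝ} (hg : Continuous g)
    (hf : ∀ t, HasDerivAt f (f t * g t) t) {t₀ : ℝ} (h₀ : 0 < f t₀) (t : ℝ) : 0 < f t := by
  set G := fun u => ∫ s in t₀..u, g s
  have hconst : ∀ u, HasDerivAt (fun u => f u * exp (-G u)) 0 u := by
    intro u
    have hG : HasDerivAt (fun u => -G u) (-g u) u :=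
      (hg.integral_hasStrictDerivAt t₀ u).hasDerivAt.neg
    exact ((hf u).mul hG.exp).congr_deriv (by ring)
  have h := is_const_of_deriv_eq_zero (fun u => (hconst u).differentiableAt)
    (fun u => (hconst u).deriv) t t₀
  simp only [G, intervalIntegral.integral_same, neg_zero, exp_zero, mul_one] at h
  exact (mul_pos_iff_of_pos_right (exp_pos _)).1 (h ▸ h₀)

theorem le_of_forall_critical_max_le {f f' : ℝ → ℝ} {a b B : ℝ} (hf : ∀ t, HasDerivAt f (f' t) t)
    (ha : Tendsto f atBot (𝓝 a)) (hb : Tendsto f atTop (𝓝 b)) (haB : a ≤ B) (hbB : b ≤ B)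
    (hmax : ∀ p, (∀ t, f t ≤ f p) → f' p = 0 → max a b < f p → f p ≤ B) (t : ℝ) :
    f t ≤ B := by
  by_contra! ht
  have hev : ∀ᶠ s in cocompact ℝ, f s ≤ f t := by
    rw [cocompact_eq_atBot_atTop]
    exact eventually_sup.2 ⟨ha.eventually (ge_mem_nhds (haB.trans_lt ht)),
      hb.eventually (ge_mem_nhds (hbB.trans_lt ht))⟩
  have hfc : Continuous f := continuous_iff_continuousAt.2 fun t => (hf t).continuousAt
  obtain ⟨p, hp⟩ := hfc.exists_forall_ge' t hev
  have hcrit : f' p = 0 := IsLocalMax.hasDerivAt_eq_zero (Eventually.of_forall hp) (hf p)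
  have := hmax p hp hcrit (max_lt (haB.trans_lt (ht.trans_le (hp t)))
    (hbB.trans_lt (ht.trans_le (hp t))))
  linarith [hp t]

theorem exists_forall_le_of_deriv_le_neg {f f' : ℝ → ℝ} {S a k d : ℝ}
    (hf : ∀ t, HasDerivAt f (f' t) t) (hk : 0 < k) (hd : 0 ≤ d) (hS : f S ≤ a + k * d)
    (hdec : ∀ t, S ≤ t → a ≤ f t → f' t ≤ -k) :
    ∃ η₀ ∈ Icc S (S + d), ∀ t, η₀ ≤ t → f t ≤ a := by
  have hfc : Continuous f := continuous_iff_continuousAt.2 fun t => (hf t).continuousAt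
  obtain ⟨η₀, hη₀, hfη₀⟩ : ∃ η₀ ∈ Icc S (S + d), f η₀ ≤ a := by
    by_contra! h
    have hSd : S ≤ S + d := by linarith
    have hmvt := (convex_Icc S (S + d)).image_sub_le_mul_sub_of_deriv_le hfc.continuousOn
      (fun t _ => (hf t).differentiableAt.differentiableWithinAt) (C := -k)
      (fun t ht => by
        rw [interior_Icc] at ht
        rw [(hf t).deriv]
        exact hdec t ht.1.le (h t (Ioo_subset_Icc_self ht)).le)
      S (left_mem_Icc.2 hSd) (S + d) (right_mem_Icc.2 hSd) hSd
    linarith [h (S + d) (right_mem_Icc.2 hSd)]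
  refine ⟨η₀, hη₀, fun t ht => ?_⟩
  exact image_le_of_deriv_right_lt_deriv_boundary' (B := fun _ => a) (B' := fun _ => 0)
    hfc.continuousOn (fun x _ => (hf x).hasDerivWithinAt) hfη₀ continuousOn_const
    (fun x _ => hasDerivWithinAt_const _ _ _)
    (fun x hx hfx => (hdec x (hη₀.1.trans hx.1) hfx.ge).trans_lt (neg_neg_of_pos hk))
    ⟨ht, le_rfl⟩

section Orbit

variable {m b c : ℝ} {X Y Z : ℝ → ℝ}

theorem X_le_max_of_Y_le {x₂ M : ℝ}
    (hX' : ∀ t, HasDerivAt X (X t * ((m - 1) * Y t - 2 * X t)) t)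
    (hXpos : ∀ t, 0 < X t) (hXbot : Tendsto X atBot (𝓝 x₂)) (hXtop : Tendsto X atTop (𝓝 0))
    (hm : 1 ≤ m) (hYM : ∀ t, Y t ≤ M) (t : ℝ) : X t ≤ max x₂ ((m - 1) * M / 2) := by
  have hx₂ : 0 ≤ x₂ := ge_of_tendsto hXbot (Eventually.of_forall fun t => (hXpos t).le)
  refine le_of_forall_critical_max_le hX' hXbot hXtop (le_max_left _ _)
    (le_max_of_le_left hx₂) (fun q _ hq _ => le_max_of_le_right ?_) t
  have hXq : X q = (m - 1) * Y q / 2 := by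
    rcases mul_eq_zero.1 hq with h | h
    · exact absurd h (hXpos q).ne'
    · linarith
  rw [hXq]
  gcongr
  exact hYM q

theorem Y_le_of_critical {x₂ y₂ l B : ℝ}
    (hX' : ∀ t, HasDerivAt X (X t * ((m - 1) * Y t - 2 * X t)) t)
    (hY' : ∀ t, HasDerivAt Y (-(Y t) ^ 2 - c * Y t + X t - X t * Y t - Z t) t)
    (hXpos : ∀ t, 0 < X t) (hZpos : ∀ t, 0 < Z t)
    (hXbot : Tendsto X atBot (𝓝 x₂)) (hXtop : Tendsto X atTop (𝓝 0))
    (hYbot : Tendsto Y atBot (𝓝 y₂)) (hYtop : Tendsto Y atTop (𝓝 l))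
    (hm : 1 ≤ m) (hc : 0 < c) (hB : 0 ≤ B) (hy₂ : y₂ ≤ B) (hl : l ≤ B) (hx₂ : x₂ ≤ c * B)
    (hmc : (m - 1) / 2 - c ≤ B) (t : ℝ) : Y t ≤ B := by
  refine le_of_forall_critical_max_le hY' hYbot hYtop hy₂ hl (fun p hp hp' _ => ?_) t
  rcases le_or_gt (Y p) 0 with hneg | hpos
  · linarith
  -- at a positive critical point, `Y (Y + c) = X - X Y - Z < X`
  have hcrit : Y p * (Y p + c) < X p := by nlinarith [mul_pos (hXpos p) hpos, hZpos p]
  rcases le_max_iff.1 (X_le_max_of_Y_le hX' hXpos hXbot hXtop hm hp p) with h | h <;> nlinarith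

theorem Y_deriv_le_of_Z_ge {e x y z : ℝ} (he : e ≤ 1 / 4) (hc : 0 < c) (hbc : b ≤ 4 * e * c)
    (hx : 0 < x) (hxb : x ≤ b / 16) (hy : -e ≤ y) (hz : 2 * e * c ≤ z) :
    -y ^ 2 - c * y + x - x * y - z ≤ -(e * c / 2) := by
  nlinarith [mul_nonneg hc.le (by linarith : 0 ≤ y + e), sq_nonneg y,
    mul_nonneg hx.le (by linarith : 0 ≤ y + e)]

theorem Z_limit_le_of_Y_le_neg {k z₀ η₀ : ℝ}
    (hX' : ∀ t, HasDerivAt X (X t * ((m - 1) * Y t - 2 * X t)) t)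
    (hZ' : ∀ t, HasDerivAt Z (b * X t * Z t) t) (hXpos : ∀ t, 0 < X t)
    (hZle : ∀ t, Z t ≤ z₀) (hXtop : Tendsto X atTop (𝓝 0)) (hZtop : Tendsto Z atTop (𝓝 z₀))
    (hb : 0 ≤ b) (hz₀ : 0 ≤ z₀) (hk : 0 < k) (hY : ∀ t, η₀ ≤ t → (m - 1) * Y t ≤ -k) :
    z₀ ≤ Z η₀ + b * z₀ * X η₀ / k := by
  -- `Z + b z₀ X / k` is a Lyapunov function once `(m - 1) Y ≤ -k`
  set W := fun t => Z t + b * z₀ * X t / k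
  have hW' : ∀ t, HasDerivAt W
      (b * X t * Z t + b * z₀ * (X t * ((m - 1) * Y t - 2 * X t)) / k) t :=
    fun t => (hZ' t).add (((hX' t).const_mul (b * z₀)).div_const k)
  have hanti : AntitoneOn W (Ici η₀) := by
    refine antitoneOn_of_hasDerivWithinAt_nonpos (convex_Ici η₀)
      (fun t _ => (hW' t).continuousAt.continuousWithinAt) (fun t _ => (hW' t).hasDerivWithinAt)
      (fun t ht => ?_)
    rw [interior_Ici] at ht
    have hXt := hXpos t
    have h1 : b * X t * Z t ≤ b * X t * z₀ := mul_le_mul_of_nonneg_left (hZle t) (by positivity)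
    have h2 : X t * ((m - 1) * Y t - 2 * X t) ≤ -k * X t := by nlinarith [hY t (le_of_lt ht)]
    have h3 : b * z₀ * (X t * ((m - 1) * Y t - 2 * X t)) / k ≤ b * z₀ * (-k * X t) / k := by
      gcongr
    have h4 : b * z₀ * (-k * X t) / k = -(b * X t * z₀) := by field_simp
    linarith
  have hWtop : Tendsto W atTop (𝓝 (z₀ + b * z₀ * 0 / k)) :=
    hZtop.add ((hXtop.const_mul _).div_const _)
  rw [mul_zero, zero_div, add_zero] at hWtop
  exact le_of_tendsto hWtop
    ((eventually_ge_atTop η₀).mono fun t ht => hanti (mem_Ici.2 le_rfl) ht ht)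

theorem Z_limit_le {e z₀ : ℝ}
    (hX' : ∀ t, HasDerivAt X (X t * ((m - 1) * Y t - 2 * X t)) t)
    (hY' : ∀ t, HasDerivAt Y (-(Y t) ^ 2 - c * Y t + X t - X t * Y t - Z t) t)
    (hZ' : ∀ t, HasDerivAt Z (b * X t * Z t) t) (hXpos : ∀ t, 0 < X t) (hZpos : ∀ t, 0 < Z t)
    (hXle : ∀ t, X t ≤ b / 16) (hYle : ∀ t, Y t ≤ b / 8) (hXtop : Tendsto X atTop (𝓝 0))
    (hZbot : Tendsto Z atBot (𝓝 0)) (hZtop : Tendsto Z atTop (𝓝 z₀))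
    (he : 0 < e) (he4 : e ≤ 1 / 4) (hc : 0 < c) (hb : 0 < b) (hb1 : b ≤ 1)
    (hbm : b ≤ (m - 1) * e) (hbc : b ≤ 4 * e * c) :
    z₀ ≤ 5 * e * c := by
  have hZmono : Monotone Z := monotone_of_hasDerivAt_nonneg hZ' fun t => by
    have := hXpos t; have := hZpos t; positivity
  have hZle : ∀ t, Z t ≤ z₀ := fun t => hZmono.ge_of_tendsto hZtop t
  have hz₀ : 0 < z₀ := (hZpos 0).trans_le (hZle 0)
  have hec : 0 < e * c := mul_pos he hc
  by_cases hsmall : ∀ t, Z t ≤ 2 * e * c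
  · linarith [le_of_tendsto' hZtop hsmall]
  push Not at hsmall
  obtain ⟨w, hw⟩ := hsmall
  obtain ⟨a, ha⟩ := (hZbot.eventually (gt_mem_nhds (by positivity : 0 < 2 * e * c))).exists
  obtain ⟨S, hZS⟩ := intermediate_value_univ a w
    (continuous_iff_continuousAt.2 fun t => (hZ' t).continuousAt) ⟨ha.le, hw.le⟩
  -- once `Z ≥ 2 e c`, `Y` falls below `-e` within time `2 / (e c)` and stays there
  obtain ⟨η₀, ⟨hSη₀, hη₀S⟩, hYneg⟩ := exists_forall_le_of_deriv_le_neg hY'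
    (a := -e) (k := e * c / 2) (d := 2 / (e * c)) (by positivity) (by positivity)
    (by field_simp; linarith [hYle S])
    (fun t ht hYt => Y_deriv_le_of_Z_ge he4 hc hbc (hXpos t) (hXle t) hYt (hZS ▸ hZmono ht))
  have hgrowth : Z η₀ - Z S ≤ b * (b / 16) * z₀ * (η₀ - S) :=
    image_sub_le_mul_sub_of_deriv_le (fun t => (hZ' t).differentiableAt) (fun t => by
      rw [(hZ' t).deriv]
      exact mul_le_mul (mul_le_mul_of_nonneg_left (hXle t) hb.le) (hZle t) (hZpos t).le
        (by positivity)) hSη₀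
  have htime : b * (η₀ - S) ≤ 8 := calc
    b * (η₀ - S) ≤ 4 * e * c * (2 / (e * c)) := by gcongr; linarith
    _ = 8 := by field_simp; ring
  have hk : 0 < (m - 1) * e := hb.trans_le hbm
  have hdecay := Z_limit_le_of_Y_le_neg hX' hZ' hXpos hZle hXtop hZtop hb.le hz₀.le hk
    (fun t ht => by nlinarith [hYneg t ht])
  have htail : b * z₀ * X η₀ / ((m - 1) * e) ≤ b * z₀ / 16 := by
    rw [div_le_iff₀ hk]
    nlinarith [hXle η₀, mul_pos hb hz₀]
  have hfirst : b * (b / 16) * z₀ * (η₀ - S) ≤ b * z₀ / 2 := by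
    nlinarith [mul_le_mul_of_nonneg_left htime (by positivity : 0 ≤ b * z₀ / 16)]
  nlinarith [mul_le_mul_of_nonneg_right hb1 hz₀.le]

end Orbit

theorem ssBeta_div_ssAlpha {m σ : ℝ} (hm : 1 < m) (hσ : 2 < σ) :
    ssBeta σ / ssAlpha m σ = 2 * (m - 1) / (σ + 2) := by
  have : σ - 2 ≠ 0 := by linarith
  have : m - 1 ≠ 0 := by linarith
  unfold ssBeta ssAlpha
  field_simp

theorem P2pt_eq {m σ : ℝ} (hm : 1 < m) (hσ : 2 < σ) :
    P2pt m σ = ((m - 1) ^ 2 * (σ - 2) / (2 * (m + 1) * (σ + 2)),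
      (m - 1) * (σ - 2) / ((m + 1) * (σ + 2)), 0) := by
  have : σ - 2 ≠ 0 := by linarith
  have : m - 1 ≠ 0 := by linarith
  have : σ + 2 ≠ 0 := by linarith
  unfold P2pt ssAlpha
  congr 1 <;> [skip; congr 1] <;> field_simp

theorem orbit_bounds {m σ l : ℝ} {X Y Z : ℝ → ℝ} (hm1 : 1 < m) (hm2 : m < 2) (hσ : 2 < σ)
    (hX' : ∀ t, HasDerivAt X (X t * ((m - 1) * Y t - 2 * X t)) t)
    (hY' : ∀ t, HasDerivAt Y
      (-(Y t) ^ 2 - 2 * (m - 1) / (σ + 2) * Y t + X t - X t * Y t - Z t) t)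
    (hZpos : ∀ t, 0 < Z t)
    (hXbot : Tendsto X atBot (𝓝 ((m - 1) ^ 2 * (σ - 2) / (2 * (m + 1) * (σ + 2)))))
    (hYbot : Tendsto Y atBot (𝓝 ((m - 1) * (σ - 2) / ((m + 1) * (σ + 2)))))
    (hXtop : Tendsto X atTop (𝓝 0)) (hYtop : Tendsto Y atTop (𝓝 l)) (hl : l ≤ 0) :
    (∀ t, 0 < X t) ∧ (∀ t, X t ≤ (σ - 2) / 16) ∧ ∀ t, Y t ≤ (σ - 2) / 8 := by
  have hm : 0 < m - 1 := by linarith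
  have hb : 0 < σ - 2 := by linarith
  have hXc : Continuous X := continuous_iff_continuousAt.2 fun t => (hX' t).continuousAt
  have hYc : Continuous Y := continuous_iff_continuousAt.2 fun t => (hY' t).continuousAt
  obtain ⟨t₀, ht₀⟩ := (hXbot.eventually (lt_mem_nhds (by positivity))).exists
  have hXpos : ∀ t, 0 < X t := pos_of_hasDerivAt_mul (by fun_prop) hX' ht₀
  have hx₂ : (m - 1) ^ 2 * (σ - 2) / (2 * (m + 1) * (σ + 2)) ≤ (σ - 2) / 16 := by
    rw [div_le_div_iff₀ (by positivity) (by norm_num)]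
    nlinarith [mul_pos hm hb, mul_pos (mul_pos hm hb) hb]
  have hYle : ∀ t, Y t ≤ (σ - 2) / 8 := by
    refine Y_le_of_critical hX' hY' hXpos hZpos hXbot hXtop hYbot hYtop hm1.le (by positivity)
      (by positivity) ?_ (by linarith) ?_ ?_
    · rw [div_le_div_iff₀ (by positivity) (by norm_num)]
      nlinarith [mul_pos hm hb]
    · rw [div_mul_div_comm, div_le_div_iff₀ (by positivity) (by positivity)]
      nlinarith [mul_pos hm hb, mul_pos (mul_pos hm hb) hb]
    · rw [div_sub_div _ _ (by norm_num) (by positivity), div_le_div_iff₀ (by positivity)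
        (by norm_num)]
      nlinarith [mul_pos hm hb]
  refine ⟨hXpos, fun t => (X_le_max_of_Y_le hX' hXpos hXbot hXtop hm1.le hYle t).trans
    (max_le hx₂ ?_), hYle⟩
  nlinarith

/-- `liminf_{σ→2⁺} λ(σ) = 0`: for every `ε > 0` there is `δ > 0` such
that for `σ ∈ (2, 2+δ)`, any globally defined orbit of (S) with `Z > 0`, emanating
from `P2` at `−∞` and converging to `P0^λ` with `λ ∈ [−β/(2α), 0)` at `+∞`,
satisfies `λ > −ε`. -/
theorem liminf_lambda_of_sigma_is_zero
    (m : ℝ) (hm1 : 1 < m) (hm2 : m < 2) :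
    ∀ ε : ℝ, 0 < ε → ∃ δ : ℝ, 0 < δ ∧ ∀ σ : ℝ, 2 < σ → σ < 2 + δ →
      ∀ (X Y Z : ℝ → ℝ) (l : ℝ),
        (∀ η : ℝ, SysAt m σ X Y Z η) →
        (∀ η : ℝ, 0 < Z η) →
        Tendsto (fun η => (X η, Y η, Z η)) atBot (𝓝 (P2pt m σ)) →
        l ∈ Ico (-(ssBeta σ / (2 * ssAlpha m σ))) (0 : ℝ) →
        Tendsto (fun η => (X η, Y η, Z η)) atTop (𝓝 (P0pt m σ l)) →
        -ε < l := by
  intro ε hε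
  set e := min (ε / 11) (1 / 4)
  have he : 0 < e := by positivity
  have hm : 0 < m - 1 := by linarith
  refine ⟨min 1 ((m - 1) * e), by positivity, fun σ hσ hσδ X Y Z l hS hZpos hbot hl htop => ?_⟩
  have hσ3 : σ < 3 := by linarith [min_le_left 1 ((m - 1) * e)]
  have hbm : σ - 2 ≤ (m - 1) * e := by linarith [min_le_right 1 ((m - 1) * e)]
  have hc := ssBeta_div_ssAlpha hm1 hσ
  rw [P2pt_eq hm1 hσ] at hbot
  rw [div_mul_eq_div_div_swap, hc] at hl
  simp only [P0pt, hc] at htop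
  simp only [SysAt, hc] at hS
  set c := 2 * (m - 1) / (σ + 2)
  have hcpos : 0 < c := by positivity
  have hbc : σ - 2 ≤ 4 * e * c := by
    rw [← mul_div_assoc, le_div_iff₀ (by positivity)]
    nlinarith [mul_pos hm he]
  obtain ⟨hXpos, hXle, hYle⟩ := orbit_bounds hm1 hm2 hσ (fun t => (hS t).1)
    (fun t => (hS t).2.1) hZpos hbot.fst_nhds hbot.snd_nhds.fst_nhds htop.fst_nhds
    htop.snd_nhds.fst_nhds hl.2.le
  have hz₀ := Z_limit_le (fun t => (hS t).1) (fun t => (hS t).2.1) (fun t => (hS t).2.2)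
    hXpos hZpos hXle hYle htop.fst_nhds hbot.snd_nhds.snd_nhds htop.snd_nhds.snd_nhds he
    (min_le_right _ _) hcpos (by linarith) (by linarith) hbm hbc
  -- `-l (l + c) ≤ 5 e c` and `l + c ≥ c / 2` give `-l ≤ 10 e`
  nlinarith [mul_nonneg (neg_nonneg.2 hl.2.le) (by linarith [hl.1] : 0 ≤ l + c / 2),
    min_le_left (ε / 11) (1 / 4)]
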